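/- The logarithmic vector fields for f = x^d + y^d (d ≥ 3) in ℂ[x,y] are generated by the Euler field E = x∂_x + y∂_y and the Hamiltonian field H = y^{d−1}∂_x − x^{d−1}∂_y: a polynomial vector field ξ = a∂_x + b∂_y satisfies ξ(f) ∈ (f) if and only if ξ = p·E + q·H for some polynomials p, q. -/

import Mathlib

/-!
Since `∂ₓf = d·x^{d-1}`, `∂_y f = d·y^{d-1}` and `d` is a unit, the condition reads
`f ∣ a·x^{d-1} + b·y^{d-1}`. Write `f = x^{d-1}·x + y^{d-1}·y`; a quotient `p` gives the syzygy
`y^{d-1}(p·y - b) = x^{d-1}(a - p·x)`. As `x^{d-1}` and `y^{d-1}` are coprime,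
`a - p·x = q·y^{d-1}`, and cancelling `y^{d-1}` leaves `b = p·y - q·x^{d-1}`.
-/

open MvPolynomial

theorem dvd_mul_add_mul_iff_of_isRelPrime {R : Type*} [CommRing R] [IsDomain R]
    [DecompositionMonoid R] {A B u v a b : R} (hAB : IsRelPrime A B) (hB : B ≠ 0) :
    A * u + B * v ∣ a * A + b * B ↔ ∃ p q, a = p * u + q * B ∧ b = p * v - q * A := by
  constructor
  · rintro ⟨p, hp⟩
    have hsyz : B * (p * v - b) = A * (a - p * u) := by linear_combination -hp
    obtain ⟨q, hq⟩ : B ∣ a - p * u := hAB.symm.dvd_of_dvd_mul_left ⟨_, hsyz.symm⟩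
    have hb : B * (p * v - b) = B * (q * A) := by rw [hsyz, hq]; ring
    exact ⟨p, q, by linear_combination hq, by linear_combination -mul_left_cancel₀ hB hb⟩
  · rintro ⟨p, q, rfl, rfl⟩
    exact ⟨p, by ring⟩

theorem MvPolynomial.isRelPrime_X_X {σ R : Type*} [CommRing R] [IsDomain R] {i j : σ}
    (hij : i ≠ j) : IsRelPrime (X i : MvPolynomial σ R) (X j) :=
  X_prime.irreducible.isRelPrime_iff_not_dvd.mpr (X_dvd_X.not.mpr hij)

/-- The logarithmic vector fields for `f = x^d + y^d` (`d ≥ 3`) are generated by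
the Euler field `E = x∂ₓ + y∂_y` and the Hamiltonian field
`H = y^{d-1}∂ₓ − x^{d-1}∂_y`: a polynomial vector field `ξ = a∂ₓ + b∂_y`
satisfies `ξ(f) ∈ (f)` iff `ξ = p·E + q·H` for polynomials `p, q`. -/
theorem log_vector_fields_fermat (d : ℕ) (hd : 3 ≤ d)
    (f : MvPolynomial (Fin 2) ℂ) (hf : f = X 0 ^ d + X 1 ^ d)
    (a b : MvPolynomial (Fin 2) ℂ) :
    (f ∣ a * pderiv 0 f + b * pderiv 1 f) ↔
    ∃ p q : MvPolynomial (Fin 2) ℂ,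
      a = p * X 0 + q * X 1 ^ (d - 1) ∧ b = p * X 1 - q * X 0 ^ (d - 1) := by
  have hd0 : d ≠ 0 := by omega
  have hdunit : IsUnit (d : MvPolynomial (Fin 2) ℂ) := by
    rw [← map_natCast C]
    exact (isUnit_iff_ne_zero.mpr (by exact_mod_cast hd0)).map C
  have hderiv : a * pderiv 0 f + b * pderiv 1 f =
      (d : MvPolynomial (Fin 2) ℂ) * (a * X 0 ^ (d - 1) + b * X 1 ^ (d - 1)) := by
    subst hf
    simp only [map_add, pderiv_pow, pderiv_X_self, pderiv_X_of_ne one_ne_zero,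
      pderiv_X_of_ne zero_ne_one]
    ring
  rw [hderiv, hdunit.dvd_mul_left, hf, ← pow_sub_one_mul hd0 (X 0), ← pow_sub_one_mul hd0 (X 1)]
  exact dvd_mul_add_mul_iff_of_isRelPrime (isRelPrime_X_X (by decide)).pow
    (pow_ne_zero _ (X_ne_zero 1))
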